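/- Let n ≥ 8. Suppose there exists a weighted spherical t-design of generalized corner-vector type on S^{n-1} given by data (a_i, s_i, W_i), i = 1,...,k, such that s_i ∈ {0,1,2} for every index i. Then t ≤ 7. -/

import Mathlib

open MeasureTheory

/-- The generalized corner vector `v_{a,s} = (a^2+s)^{-1/2} (a,1,...,1,0,...,0)`
(with `s` ones after the first coordinate `a`) in `ℝ^n`. -/
noncomputable def cornerVec (n : ℕ) (a : ℝ) (s : ℕ) : EuclideanSpace ℝ (Fin n) :=
  WithLp.toLp 2 fun i => (Real.sqrt (a ^ 2 + s))⁻¹ *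
    (if (i : ℕ) = 0 then a else if (i : ℕ) ≤ s then 1 else 0)

/-- The orbit `v_{a,s}^{B_n}` of the generalized corner vector under the
hyperoctahedral group (coordinate permutations and sign changes). -/
noncomputable def cornerOrbit (n : ℕ) (a : ℝ) (s : ℕ) : Finset (EuclideanSpace ℝ (Fin n)) :=
  @Finset.image _ _ (Classical.decEq _)
    (fun p : Equiv.Perm (Fin n) × (Fin n → Bool) =>
      (WithLp.toLp 2 fun i => (if p.2 i then (-1 : ℝ) else 1) * cornerVec n a s (p.1 i) :
        EuclideanSpace ℝ (Fin n)))
    Finset.univ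

/-- The average `(1/|S^{n-1}|) ∫_{S^{n-1}} f dρ` of a polynomial over the unit sphere,
with respect to the surface ((n-1)-dimensional Hausdorff) measure. -/
noncomputable def sphereAvg (n : ℕ) (f : MvPolynomial (Fin n) ℝ) : ℝ :=
  ⨍ x in Metric.sphere (0 : EuclideanSpace ℝ (Fin n)) 1,
    MvPolynomial.eval (fun i => x i) f ∂ μH[(n : ℝ) - 1]

/-- The sum `Σ_{x ∈ v_{a,s}^{B_n}} f(x)`. -/
noncomputable def orbitSum (n : ℕ) (a : ℝ) (s : ℕ) (f : MvPolynomial (Fin n) ℝ) : ℝ :=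
  ∑ y ∈ cornerOrbit n a s, MvPolynomial.eval (fun i => y i) f

/-- A weighted spherical `t`-design of generalized corner-vector type on `S^{n-1}`:
the spherical average of every polynomial of total degree at most `t` equals the
weighted sum over the orbits `v_{a_i,s_i}^{B_n}` with weights `W_i`. -/
def isDesign (n t k : ℕ) (a : Fin k → ℝ) (s : Fin k → ℕ) (W : Fin k → ℝ) : Prop :=
  ∀ f : MvPolynomial (Fin n) ℝ, f.totalDegree ≤ t →
    sphereAvg n f = ∑ i, W i * orbitSum n (a i) (s i) f


/-!
Suppose `t ≥ 8`. The orthogonal map `H_{ij}` replacing the coordinates `x_i, x_j` by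
`(x_i + x_j)/√2, (x_i - x_j)/√2` satisfies `(H x)_i² - (H x)_j² = 2 x_i x_j`. Applying it on the
pairs `(0,3)` and `(1,4)` turns the nonnegative octic `P = ((x_0² - x_3²)(x_1² - x_4²))²` into
`Q = 16 (x_0 x_1 x_3 x_4)²`, so `P` and `Q` have the same spherical average. A point of
`v_{a,s}^{B_n}` with `s ≤ 2` has at most three nonzero coordinates, so `Q` vanishes on the design
and has average `0`. Hence every positively weighted orbit sum of `P ≥ 0` vanishes, whereas
`P(v_{a,s}) ≠ 0` when `s ≥ 1`. If all `s_i = 0`, the single pair `(0,1)` gives the same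
contradiction already in degree `4`.
-/

open MvPolynomial

theorem sphereAvg_eq_of_eval_comp {n : ℕ}
    (R : EuclideanSpace ℝ (Fin n) ≃ₗᵢ[ℝ] EuclideanSpace ℝ (Fin n))
    {f g : MvPolynomial (Fin n) ℝ}
    (hfg : ∀ x : EuclideanSpace ℝ (Fin n), eval (fun i => R x i) f = eval (fun i => x i) g) :
    sphereAvg n g = sphereAvg n f := by
  have hR := R.toIsometryEquiv.measurePreserving_hausdorffMeasure ((n : ℝ) - 1)
  have hS : R ⁻¹' Metric.sphere 0 1 = Metric.sphere 0 1 := by simp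
  have hint := hR.setIntegral_preimage_emb R.toHomeomorph.measurableEmbedding
    (fun x => eval (fun i => x i) f) (Metric.sphere 0 1)
  simp only [sphereAvg, setAverage_eq, ← hint, LinearIsometryEquiv.coe_toIsometryEquiv, hS, hfg]

noncomputable def coordHadamard {n : ℕ} (i j : Fin n) :
    EuclideanSpace ℝ (Fin n) →ₗ[ℝ] EuclideanSpace ℝ (Fin n) where
  toFun x := WithLp.toLp 2 fun m =>
    if m = i then (x i + x j) / √2 else if m = j then (x i - x j) / √2 else x m
  map_add' x y := by
    ext m
    simp only [PiLp.add_apply]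
    split_ifs <;> ring
  map_smul' c x := by
    ext m
    simp only [PiLp.smul_apply, smul_eq_mul, RingHom.id_apply]
    split_ifs <;> ring

section coordHadamard

variable {n : ℕ} {i j : Fin n} (x : EuclideanSpace ℝ (Fin n))

theorem coordHadamard_apply_left : coordHadamard i j x i = (x i + x j) / √2 := by
  simp [coordHadamard]

theorem coordHadamard_apply_right (hij : i ≠ j) :
    coordHadamard i j x j = (x i - x j) / √2 := by
  simp [coordHadamard, hij.symm]

theorem coordHadamard_apply_of_ne {m : Fin n} (hi : m ≠ i) (hj : m ≠ j) :
    coordHadamard i j x m = x m := by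
  simp [coordHadamard, hi, hj]

theorem coordHadamard_sq_sub_sq (hij : i ≠ j) :
    coordHadamard i j x i ^ 2 - coordHadamard i j x j ^ 2 = 2 * (x i * x j) := by
  rw [coordHadamard_apply_left, coordHadamard_apply_right x hij, div_pow, div_pow,
    Real.sq_sqrt zero_le_two]
  ring

theorem norm_coordHadamard (hij : i ≠ j) : ‖coordHadamard i j x‖ = ‖x‖ := by
  suffices h : ∑ m, (coordHadamard i j x m ^ 2 - x m ^ 2) = 0 by
    rw [Finset.sum_sub_distrib, sub_eq_zero] at h
    simp only [EuclideanSpace.norm_eq, Real.norm_eq_abs, sq_abs, h]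
  rw [← Finset.sum_subset (Finset.subset_univ {i, j}), Finset.sum_pair hij]
  · rw [coordHadamard_apply_left, coordHadamard_apply_right x hij, div_pow, div_pow,
      Real.sq_sqrt zero_le_two]
    ring
  · intro m _ hm
    simp only [Finset.mem_insert, Finset.mem_singleton, not_or] at hm
    rw [coordHadamard_apply_of_ne x hm.1 hm.2, sub_self]

theorem coordHadamard_comp_sq_sub_sq_mul (hij : i ≠ j) {k l : Fin n} (hkl : k ≠ l)
    (hki : k ≠ i) (hkj : k ≠ j) (hli : l ≠ i) (hlj : l ≠ j) :
    (coordHadamard i j (coordHadamard k l x) i ^ 2 -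
        coordHadamard i j (coordHadamard k l x) j ^ 2) *
      (coordHadamard i j (coordHadamard k l x) k ^ 2 -
        coordHadamard i j (coordHadamard k l x) l ^ 2) =
      4 * (x i * x j * (x k * x l)) := by
  rw [coordHadamard_sq_sub_sq _ hij, coordHadamard_apply_of_ne _ hki hkj,
    coordHadamard_apply_of_ne _ hli hlj, coordHadamard_sq_sub_sq _ hkl,
    coordHadamard_apply_of_ne _ hki.symm hli.symm, coordHadamard_apply_of_ne _ hkj.symm hlj.symm]
  ring

end coordHadamard

noncomputable def coordHadamardEquiv {n : ℕ} {i j : Fin n} (hij : i ≠ j) :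
    EuclideanSpace ℝ (Fin n) ≃ₗᵢ[ℝ] EuclideanSpace ℝ (Fin n) :=
  LinearIsometry.toLinearIsometryEquiv ⟨coordHadamard i j, fun x => norm_coordHadamard x hij⟩ rfl

theorem coordHadamardEquiv_apply {n : ℕ} {i j : Fin n} (hij : i ≠ j)
    (x : EuclideanSpace ℝ (Fin n)) : coordHadamardEquiv hij x = coordHadamard i j x := rfl

section cornerOrbit

variable {n : ℕ} {a : ℝ} {s : ℕ}

theorem cornerVec_apply_of_eq_zero {m : Fin n} (h : (m : ℕ) = 0) :
    cornerVec n a s m = (√(a ^ 2 + s))⁻¹ * a := by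
  simp [cornerVec, h]

theorem cornerVec_apply_of_le {m : Fin n} (h0 : (m : ℕ) ≠ 0) (h : (m : ℕ) ≤ s) :
    cornerVec n a s m = (√(a ^ 2 + s))⁻¹ := by
  simp [cornerVec, h0, h]

theorem cornerVec_apply_of_lt {m : Fin n} (h : s < m) : cornerVec n a s m = 0 := by
  simp [cornerVec, h.not_ge, (Nat.zero_le s).trans_lt h |>.ne']

theorem mem_cornerOrbit {y : EuclideanSpace ℝ (Fin n)} :
    y ∈ cornerOrbit n a s ↔ ∃ (σ : Equiv.Perm (Fin n)) (ε : Fin n → Bool),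
      y = WithLp.toLp 2 fun m => (if ε m then (-1 : ℝ) else 1) * cornerVec n a s (σ m) := by
  simp only [cornerOrbit, @Finset.mem_image _ _ (Classical.decEq _), Finset.mem_univ, true_and,
    Prod.exists, eq_comm]

theorem cornerVec_mem_cornerOrbit : cornerVec n a s ∈ cornerOrbit n a s :=
  mem_cornerOrbit.mpr ⟨1, fun _ => false, by simp⟩

theorem prod_eq_zero_of_mem_cornerOrbit {y : EuclideanSpace ℝ (Fin n)}
    (hy : y ∈ cornerOrbit n a s) {T : Finset (Fin n)} (hT : s + 1 < T.card) :
    ∏ m ∈ T, y m = 0 := by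
  obtain ⟨σ, ε, rfl⟩ := mem_cornerOrbit.mp hy
  by_contra hne
  have hmaps : ∀ m ∈ T, (σ m : ℕ) ∈ Finset.range (s + 1) := by
    intro m hm
    have hm := Finset.prod_ne_zero_iff.mp hne m hm
    by_contra hlt
    simp [cornerVec_apply_of_lt (Nat.lt_of_not_le (by simpa using hlt))] at hm
  obtain ⟨m, -, m', -, hne', heq⟩ :=
    Finset.exists_ne_map_eq_of_card_lt_of_maps_to (by simpa using hT) hmaps
  exact hne' (σ.injective (Fin.ext heq))

end cornerOrbit

theorem totalDegree_X_sq_sub_X_sq_le {n : ℕ} (i j : Fin n) :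
    (X i ^ 2 - X j ^ 2 : MvPolynomial (Fin n) ℝ).totalDegree ≤ 2 :=
  (totalDegree_sub _ _).trans (by simp)

theorem totalDegree_C_mul_prod_X_le {n : ℕ} (c : ℝ) (T : Finset (Fin n)) :
    (C c * ∏ m ∈ T, X m : MvPolynomial (Fin n) ℝ).totalDegree ≤ T.card := by
  refine (totalDegree_mul _ _).trans ?_
  rw [totalDegree_C, zero_add]
  refine (totalDegree_finsetProd _ _).trans ?_
  simp

namespace isDesign

variable {n t k : ℕ} {a : Fin k → ℝ} {s : Fin k → ℕ} {W : Fin k → ℝ}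

theorem sphereAvg_eq_zero (hd : isDesign n t k a s W) {f : MvPolynomial (Fin n) ℝ}
    (hf : f.totalDegree ≤ t)
    (hzero : ∀ i, ∀ y ∈ cornerOrbit n (a i) (s i), eval (fun m => y m) f = 0) :
    sphereAvg n f = 0 := by
  rw [hd f hf]
  exact Finset.sum_eq_zero fun i _ => by
    rw [orbitSum, Finset.sum_eq_zero (hzero i), mul_zero]

theorem eval_eq_zero_of_sphereAvg_eq_zero (hd : isDesign n t k a s W) (hW : ∀ i, 0 < W i)
    {f : MvPolynomial (Fin n) ℝ} (hf : f.totalDegree ≤ t)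
    (hnonneg : ∀ x, 0 ≤ eval x f) (havg : sphereAvg n f = 0) :
    ∀ i, ∀ y ∈ cornerOrbit n (a i) (s i), eval (fun m => y m) f = 0 := by
  have horbit : ∀ i, 0 ≤ orbitSum n (a i) (s i) f := fun i =>
    Finset.sum_nonneg fun y _ => hnonneg _
  rw [hd f hf, Finset.sum_eq_zero_iff_of_nonneg fun i _ => mul_nonneg (hW i).le (horbit i)]
    at havg
  intro i
  have hi : orbitSum n (a i) (s i) f = 0 :=
    (mul_eq_zero.mp (havg i (Finset.mem_univ i))).resolve_left (hW i).ne'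
  exact (Finset.sum_eq_zero_iff_of_nonneg fun y _ => hnonneg _).mp hi

theorem eval_eq_zero_of_eval_comp_eq_prod (hd : isDesign n t k a s W) (hW : ∀ i, 0 < W i)
    (R : EuclideanSpace ℝ (Fin n) ≃ₗᵢ[ℝ] EuclideanSpace ℝ (Fin n))
    {F : MvPolynomial (Fin n) ℝ} {c : ℝ} {T : Finset (Fin n)}
    (hF : ∀ x : EuclideanSpace ℝ (Fin n), eval (fun m => R x m) F = c * ∏ m ∈ T, x m)
    (hdegF : 2 * F.totalDegree ≤ t) (hdegT : 2 * T.card ≤ t) (hT : ∀ i, s i + 1 < T.card) :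
    ∀ i, ∀ y ∈ cornerOrbit n (a i) (s i), eval (fun m => y m) F = 0 := by
  set Q : MvPolynomial (Fin n) ℝ := (C c * ∏ m ∈ T, X m) ^ 2
  have hQdeg : Q.totalDegree ≤ t :=
    (totalDegree_pow _ 2).trans (by linarith [totalDegree_C_mul_prod_X_le c T])
  have hQ : sphereAvg n Q = 0 := hd.sphereAvg_eq_zero hQdeg fun i y hy => by
    simp [Q, prod_eq_zero_of_mem_cornerOrbit hy (hT i)]
  have hPQ : sphereAvg n Q = sphereAvg n (F ^ 2) :=
    sphereAvg_eq_of_eval_comp R fun x => by simp [Q, hF]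
  intro i y hy
  refine pow_eq_zero_iff two_ne_zero |>.mp ?_
  rw [← eval_pow]
  exact hd.eval_eq_zero_of_sphereAvg_eq_zero hW ((totalDegree_pow F 2).trans hdegF)
    (fun x => by simpa using sq_nonneg (eval x F)) (hPQ ▸ hQ) i y hy

theorem lt_four_of_forall_eq_zero (hd : isDesign n t k a s W) (hn : 2 ≤ n)
    (hW : ∀ i, 0 < W i) (hs : ∀ i, s i = 0) {i₀ : Fin k} (ha : a i₀ ≠ 0) : t < 4 := by
  by_contra! ht
  set i0 : Fin n := ⟨0, by omega⟩
  set i1 : Fin n := ⟨1, by omega⟩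
  have h01 : i0 ≠ i1 := by simp [i0, i1]
  have hF (x : EuclideanSpace ℝ (Fin n)) :
      eval (fun m => coordHadamardEquiv h01 x m) (X i0 ^ 2 - X i1 ^ 2) =
        2 * ∏ m ∈ {i0, i1}, x m := by
    simp [coordHadamardEquiv_apply, coordHadamard_sq_sub_sq, h01]
  have hzero := hd.eval_eq_zero_of_eval_comp_eq_prod hW _ hF
    (by linarith [totalDegree_X_sq_sub_X_sq_le i0 i1])
    (by rw [Finset.card_pair h01]; omega) (fun i => by simp [hs i, Finset.card_pair h01])
    i₀ _ cornerVec_mem_cornerOrbit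
  rw [hs i₀] at hzero
  simp [cornerVec_apply_of_eq_zero (show (i0 : ℕ) = 0 from rfl),
    cornerVec_apply_of_lt (show 0 < (i1 : ℕ) from one_pos), Real.sqrt_sq_eq_abs, ha] at hzero

theorem lt_eight_of_le_two (hd : isDesign n t k a s W) (hn : 5 ≤ n) (hW : ∀ i, 0 < W i)
    (hs : ∀ i, s i ≤ 2) {i₀ : Fin k} (ha : a i₀ ≠ 0) (hi₀ : 1 ≤ s i₀) : t < 8 := by
  by_contra! ht
  set i0 : Fin n := ⟨0, by omega⟩
  set i1 : Fin n := ⟨1, by omega⟩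
  set i3 : Fin n := ⟨3, by omega⟩
  set i4 : Fin n := ⟨4, by omega⟩
  have h03 : i0 ≠ i3 := by simp [i0, i3]
  have h14 : i1 ≠ i4 := by simp [i1, i4]
  have h10 : i1 ≠ i0 := by simp [i0, i1]
  have h13 : i1 ≠ i3 := by simp [i1, i3]
  have h40 : i4 ≠ i0 := by simp [i0, i4]
  have h43 : i4 ≠ i3 := by simp [i3, i4]
  have hT : ({i0, i3, i1, i4} : Finset (Fin n)).card = 4 := by
    simp [i0, i1, i3, i4, Finset.card_insert_of_notMem]
  set R := (coordHadamardEquiv h14).trans (coordHadamardEquiv h03)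
  have hF (x : EuclideanSpace ℝ (Fin n)) :
      eval (fun m => R x m) ((X i0 ^ 2 - X i3 ^ 2) * (X i1 ^ 2 - X i4 ^ 2)) =
        4 * ∏ m ∈ {i0, i3, i1, i4}, x m := by
    simp only [R, LinearIsometryEquiv.trans_apply, coordHadamardEquiv_apply, eval_mul, eval_sub,
      eval_pow, eval_X, coordHadamard_comp_sq_sub_sq_mul x h03 h14 h10 h13 h40 h43]
    rw [Finset.prod_insert (by simp [h03, h10.symm, h40.symm]),
      Finset.prod_insert (by simp [h13.symm, h43.symm]), Finset.prod_pair h14]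
    ring
  have hFdeg := totalDegree_mul (X i0 ^ 2 - X i3 ^ 2 : MvPolynomial (Fin n) ℝ) (X i1 ^ 2 - X i4 ^ 2)
  have hzero := hd.eval_eq_zero_of_eval_comp_eq_prod hW R hF
    (by linarith [totalDegree_X_sq_sub_X_sq_le i0 i3, totalDegree_X_sq_sub_X_sq_le i1 i4])
    (by omega) (fun i => by have := hs i; omega) i₀ _ cornerVec_mem_cornerOrbit
  have hpos : 0 < a i₀ ^ 2 + s i₀ := by positivity
  have hs₀ := hs i₀
  simp [cornerVec_apply_of_eq_zero (show (i0 : ℕ) = 0 from rfl),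
    cornerVec_apply_of_le (show (i1 : ℕ) ≠ 0 from one_ne_zero) hi₀,
    cornerVec_apply_of_lt (show s i₀ < i3 by simp [i3]; omega),
    cornerVec_apply_of_lt (show s i₀ < i4 by simp [i4]; omega),
    Real.sqrt_eq_zero', hpos.not_ge, ha] at hzero

end isDesign

theorem degree_bound_of_small_s_general (n t k : ℕ) (hn : 8 ≤ n) (hk : 1 ≤ k)
    (a : Fin k → ℝ) (s : Fin k → ℕ) (W : Fin k → ℝ)
    (ha : ∀ i, 0 < a i) (hW : ∀ i, 0 < W i)
    (hsmall : ∀ i, s i ≤ 2)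
    (hd : isDesign n t k a s W) :
    t ≤ 7 := by
  by_cases h : ∃ i, 1 ≤ s i
  · obtain ⟨i, hi⟩ := h
    have := hd.lt_eight_of_le_two (by omega) hW hsmall (ha i).ne' hi
    omega
  · push Not at h
    have := hd.lt_four_of_forall_eq_zero (by omega) hW (fun i => Nat.lt_one_iff.mp (h i))
      (ha ⟨0, hk⟩).ne'
    omega

/-- If `n ≥ 8` and every `s_i ∈ {0,1,2}`, the degree is at most 7. -/
theorem degree_bound_of_small_s (n t k : ℕ) (hn : 8 ≤ n) (hk : 1 ≤ k)
    (a : Fin k → ℝ) (s : Fin k → ℕ) (W : Fin k → ℝ)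
    (ha : ∀ i, 0 < a i) (hs : ∀ i, s i ≤ n - 1) (hW : ∀ i, 0 < W i)
    (hsmall : ∀ i, s i ≤ 2)
    (hd : isDesign n t k a s W) :
    t ≤ 7 :=
  degree_bound_of_small_s_general n t k hn hk a s W ha hW hsmall hd
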